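/- Let n ≥ 1, let d = 2n and let s₁ = (−2, n+1) ∈ ℤ². Then for every i ∈ ℤ/2nℤ, the Kashiwara operator ẽ_i (defined with respect to d and the charge s₁) annihilates the bipartition 2^{n−1}.∅: ẽ_i(2^{n−1}.∅) = 0. -/

import Mathlib

open scoped Classical

noncomputable section

/-- A partition: an antitone, eventually zero sequence of natural numbers.
`parts k` is the `(k+1)`-st part `λ_{k+1}`. -/
structure NPartition where
  parts : ℕ → ℕ
  antitone' : Antitone parts
  exists_zero : ∃ N, parts N = 0

namespace NPartition

lemma sorted_getD_antitone {l : List ℕ} (h : l.Pairwise (· ≥ ·)) :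
    Antitone (fun k => l.getD k 0) := by
  intro i j hij
  simp only
  rcases lt_or_ge j l.length with hj | hj
  · have hi : i < l.length := lt_of_le_of_lt hij hj
    rw [List.getD_eq_getElem l 0 hj, List.getD_eq_getElem l 0 hi]
    rcases eq_or_lt_of_le hij with rfl | hlt
    · exact le_rfl
    · exact List.pairwise_iff_getElem.mp h i j hi hj hlt
  · rw [List.getD_eq_default l 0 hj]
    exact Nat.zero_le _

/-- The partition whose multiset of (nonzero) parts is the multiset of nonzero
elements of `m`. -/
def ofMul (m : Multiset ℕ) : NPartition where
  parts := fun k => ((m.sort (· ≤ ·)).reverse).getD k 0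
  antitone' := by
    apply sorted_getD_antitone
    rw [List.pairwise_reverse]
    exact Multiset.pairwise_sort (s := m) (r := (· ≤ ·))
  exists_zero := ⟨((m.sort (· ≤ ·)).reverse).length, List.getD_eq_default _ _ le_rfl⟩

/-- The size `|λ|` of a partition: the sum of its parts. -/
def size (p : NPartition) : ℕ := ∑ i ∈ Finset.range (Nat.find p.exists_zero), p.parts i

lemma finite_gt (p : NPartition) (k : ℕ) : {i : ℕ | k < p.parts i}.Finite := by
  obtain ⟨N, hN⟩ := p.exists_zero
  apply (Set.finite_Iio N).subset
  intro i hi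
  simp only [Set.mem_setOf_eq] at hi
  by_contra hc
  simp only [Set.mem_Iio, not_lt] at hc
  have := p.antitone' hc
  omega

/-- The conjugate (transpose) partition. -/
def conj (p : NPartition) : NPartition where
  parts := fun k => {i : ℕ | k < p.parts i}.ncard
  antitone' := fun a b hab =>
    Set.ncard_le_ncard (fun i hi => lt_of_le_of_lt hab hi) (p.finite_gt a)
  exists_zero := by
    refine ⟨p.parts 0, ?_⟩
    have h : {i : ℕ | p.parts 0 < p.parts i} = ∅ := by
      ext i
      simp only [Set.mem_setOf_eq, Set.mem_empty_iff_false, iff_false, not_lt]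
      exact p.antitone' (Nat.zero_le i)
    beta_reduce
    rw [h, Set.ncard_empty]

/-- The 180°-rotation of the complement of `p` inside the rectangle with
`rows` rows of length `c`: the partition `(c - p_rows, c - p_{rows-1}, …, c - p₁)`. -/
def rotCompl (c rows : ℕ) (p : NPartition) : NPartition where
  parts := fun k => if k < rows then c - p.parts (rows - 1 - k) else 0
  antitone' := by
    intro a b hab
    by_cases hb : b < rows
    · have ha : a < rows := lt_of_le_of_lt hab hb
      simp only [if_pos hb, if_pos ha]
      exact Nat.sub_le_sub_left (p.antitone' (by omega)) c
    · simp only [if_neg hb]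
      exact Nat.zero_le _
  exists_zero := ⟨rows, by simp⟩

end NPartition

/-- A bipartition: a pair of partitions. -/
abbrev Bipartition := NPartition × NPartition

/-- The size of a bipartition. -/
def Bipartition.size (l : Bipartition) : ℕ := l.1.size + l.2.size

/-- The bipartition whose components have parts the multisets `a` and `b`. -/
def bip (a b : Multiset ℕ) : Bipartition := (NPartition.ofMul a, NPartition.ofMul b)

/-- The multiset of parts of the partition `a 1^b` (one part `a`, then `b` parts `1`). -/
def hook (a b : ℕ) : Multiset ℕ := a ::ₘ Multiset.replicate b 1

/-- The charged β-set of a partition, as a sequence: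
`betaSet p s i = λ_{i+1} + s - (i+1) + 1`. -/
def betaSet (p : NPartition) (s : ℤ) (i : ℕ) : ℤ := (p.parts i : ℤ) + s - i

/-- The charged symbol of a bipartition with charge `σ`, as a pair of subsets of `ℤ`. -/
def symbolOf (l : Bipartition) (σ : ℤ × ℤ) : Set ℤ × Set ℤ :=
  (Set.range (betaSet l.1 σ.1), Set.range (betaSet l.2 σ.2))

/-- The charge `σ_t`. -/
def sigmaT (t : ℕ) : ℤ × ℤ :=
  if Even t then ((t : ℤ), -1 - (t : ℤ)) else (-1 - (t : ℤ), (t : ℤ))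

/-- The trivial symbol `({0,-1,-2,…},{-1,-2,-3,…})`, the symbol of the empty
bipartition with charge `σ₀ = (0,-1)`. -/
def trivialSymbol : Set ℤ × Set ℤ := ({z : ℤ | z ≤ 0}, {z : ℤ | z ≤ -1})

/-- Removing one `n`-co-hook from the symbol `Λ`, yielding `Λ'`: remove `x+n` from one
row, adjoin `x` to the other row, and exchange the two rows. -/
def CohookStep (n : ℕ) (Λ Λ' : Set ℤ × Set ℤ) : Prop :=
  (∃ x : ℤ, x + n ∈ Λ.1 ∧ x ∉ Λ.2 ∧ Λ' = (Λ.2 ∪ {x}, Λ.1 \ {x + n})) ∨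
  (∃ x : ℤ, x + n ∈ Λ.2 ∧ x ∉ Λ.1 ∧ Λ' = (Λ.2 \ {x + n}, Λ.1 ∪ {x}))

/-- `C` is the `n`-co-core of `Λ`: it is obtained from `Λ` by recursively removing
`n`-co-hooks, and no further `n`-co-hook can be removed. -/
def IsCocore (n : ℕ) (Λ C : Set ℤ × Set ℤ) : Prop :=
  Relation.ReflTransGen (CohookStep n) Λ C ∧ ∀ C', ¬ CohookStep n C C'

/-- Number of entries of the charged β-set of `p` that are `≥ α` (with multiplicity). -/
def betaCountGE (p : NPartition) (s α : ℤ) : ℕ := Nat.card {i : ℕ // α ≤ betaSet p s i}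

/-- Number of entries `≥ α`, with multiplicity, of the multiset union of the two rows
of the symbol of `l` with charge `σ`. -/
def symCountGE (l : Bipartition) (σ : ℤ × ℤ) (α : ℤ) : ℕ :=
  betaCountGE l.1 σ.1 α + betaCountGE l.2 σ.2 α

/-- The composition `ϖ_Λ` of the symbol of `l` with charge `σ`: `comp l σ k` is the
`(k+1)`-st largest entry (with multiplicity) of the multiset union of the two rows. -/
def comp (l : Bipartition) (σ : ℤ × ℤ) (k : ℕ) : ℤ :=
  sSup {z : ℤ | k + 1 ≤ symCountGE l σ z}

/-- All partial sums of the composition of the symbol `(l,σ)` are bounded by those of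
`(m,τ)`. -/
def DomLE (l : Bipartition) (σ : ℤ × ℤ) (m : Bipartition) (τ : ℤ × ℤ) : Prop :=
  ∀ j : ℕ, ∑ k ∈ Finset.range j, comp l σ k ≤ ∑ k ∈ Finset.range j, comp m τ k

/-- Strict dominance `Λ ⊲ Λ'` of symbols: the compositions differ and all partial sums
of the first are bounded by those of the second. -/
def DomLT (l : Bipartition) (σ : ℤ × ℤ) (m : Bipartition) (τ : ℤ × ℤ) : Prop :=
  comp l σ ≠ comp m τ ∧ DomLE l σ m τ

/-- A box `(x, y, j)` (0-indexed row `x`, 0-indexed column `y`, component `j`: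
`j = 0` is the first component, `j = 1` the second). -/
abbrev Box := ℕ × ℕ × Fin 2

/-- The component of a bipartition selected by `j : Fin 2`. -/
def Bipartition.partsOf (l : Bipartition) (j : Fin 2) : NPartition := if j = 0 then l.1 else l.2

/-- Membership of a box in the Young diagram of a bipartition. -/
def MemY (l : Bipartition) (b : Box) : Prop := b.2.1 < (l.partsOf b.2.2).parts b.1

/-- The entry of the charge `σ` corresponding to component `j`. -/
def chargeOf (σ : ℤ × ℤ) (j : Fin 2) : ℤ := if j = 0 then σ.1 else σ.2

/-- The charged content `co^σ(b) = y - x + σ_j` of a box. -/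
def content (σ : ℤ × ℤ) (b : Box) : ℤ := (b.2.1 : ℤ) - (b.1 : ℤ) + chargeOf σ b.2.2

/-- `j(b) ∈ {1,2}`: the component of a box, numbered 1 or 2. -/
def jval (b : Box) : ℕ := (b.2.2 : ℕ) + 1

/-- The counting function of the Dunkl–Griffeth order. -/
def dgCount (l : Bipartition) (s : ℤ × ℤ) (d : ℕ) (α : ℝ) (j : ℕ) : ℕ :=
  Nat.card {b : Box // MemY l b ∧
    (α < (content s b : ℝ) - (jval b : ℝ) * (d : ℝ) / 2 ∨
      ((content s b : ℝ) - (jval b : ℝ) * (d : ℝ) / 2 = α ∧ jval b ≤ j))}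

/-- The Dunkl–Griffeth order `λ ⪯_s μ` (with respect to `d`). -/
def DGLE (l m : Bipartition) (s : ℤ × ℤ) (d : ℕ) : Prop :=
  ∀ (α : ℝ), ∀ j ∈ ({1, 2} : Set ℕ), dgCount l s d α j ≤ dgCount m s d α j

/-- A box of the extended Young diagram: rows are infinite to the left, so the column
coordinate is an integer.  `(x, y, j)` is the box in (0-indexed) row `x`, with integer
column coordinate `y` (`y = 0` is the first column), in component `j`. -/
abbrev ExtBox := ℕ × ℤ × Fin 2

/-- Membership in the extended Young diagram of a bipartition. -/
def MemExtY (l : Bipartition) (b : ExtBox) : Prop :=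
  b.2.1 < ((l.partsOf b.2.2).parts b.1 : ℤ)

/-- The charged content of an extended box. -/
def contentExt (σ : ℤ × ℤ) (b : ExtBox) : ℤ := b.2.1 - (b.1 : ℤ) + chargeOf σ b.2.2

/-- `b` is a removable box of the bipartition `l`. -/
def Removable (l : Bipartition) (b : Box) : Prop :=
  (l.partsOf b.2.2).parts b.1 = b.2.1 + 1 ∧ (l.partsOf b.2.2).parts (b.1 + 1) ≤ b.2.1

/-- `b` is an addable box of the bipartition `l`. -/
def Addable (l : Bipartition) (b : Box) : Prop :=
  (l.partsOf b.2.2).parts b.1 = b.2.1 ∧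
    (b.1 = 0 ∨ b.2.1 + 1 ≤ (l.partsOf b.2.2).parts (b.1 - 1))

/-- The order in which boxes are listed in the `i`-word: increasing charged content,
a component-2 box preceding a component-1 box of equal charged content. -/
def BoxLT (σ : ℤ × ℤ) (b b' : Box) : Prop :=
  content σ b < content σ b' ∨
    (content σ b = content σ b' ∧ b.2.2 = 1 ∧ b'.2.2 = 0)

/-- `L` is the list of boxes underlying the `i`-word of `(l, σ)` with respect to `d`:
it lists, in increasing order, exactly the addable and removable boxes of `l` whose
charged content is congruent to `i` modulo `d`. -/
def IsIWord (l : Bipartition) (σ : ℤ × ℤ) (d : ℕ) (i : ZMod d) (L : List Box) : Prop :=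
  L.Pairwise (BoxLT σ) ∧
    ∀ b : Box, b ∈ L ↔ ((Addable l b ∨ Removable l b) ∧ ((content σ b : ZMod d) = i))

/-- The sign of a box in the `i`-word: `true` (`+`) for addable, `false` (`−`) for
removable boxes. -/
def signOf (l : Bipartition) (b : Box) : Bool := if Addable l b then true else false

/-- One reduction step on words: delete an adjacent pair `−+`. -/
def RedStep (w w' : List Bool) : Prop :=
  ∃ u v : List Bool, w = u ++ false :: true :: v ∧ w' = u ++ v

/-- `ẽ_i l = 0`: the reduced `i`-word of `(l, σ)` contains no `−`, i.e. the `i`-word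
reduces to a word consisting only of `+`'s. -/
def AnnihilatedE (l : Bipartition) (σ : ℤ × ℤ) (d : ℕ) (i : ZMod d) : Prop :=
  ∃ L : List Box, IsIWord l σ d i L ∧
    ∃ a : ℕ, Relation.ReflTransGen RedStep (L.map (signOf l)) (List.replicate a true)

/-- `q` is obtained from the partition `p` by adding one box. -/
def PCovers (p q : NPartition) : Prop :=
  ∃ x : ℕ, q.parts x = p.parts x + 1 ∧ ∀ y : ℕ, y ≠ x → q.parts y = p.parts y

/-- `m` is obtained from the bipartition `l` by adding one box to its Young diagram. -/
def BipCovers (l m : Bipartition) : Prop :=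
  (PCovers l.1 m.1 ∧ m.2 = l.2) ∨ (m.1 = l.1 ∧ PCovers l.2 m.2)

/-- `A(l) = Σ_μ μ`, the sum over all bipartitions obtained from `l` by adding one box,
as an element of the group of `ℤ`-valued functions on bipartitions. -/
def addB (l : Bipartition) : Bipartition → ℤ := fun m => if BipCovers l m then 1 else 0

/-- The projection `π_S` onto the span of the bipartitions lying in `S`. -/
def projS (S : Set Bipartition) (f : Bipartition → ℤ) : Bipartition → ℤ :=
  fun m => if m ∈ S then f m else 0

/-- The basis element of `ℤ[BP]` corresponding to a bipartition. -/
def deltaB (l : Bipartition) : Bipartition → ℤ := fun m => if m = l then 1 else 0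

/-- The bipartitions of `2n` labelling the principal-series unipotent characters in
the principal `Φ_{2n}`-block. -/
def PS (n : ℕ) : Set Bipartition :=
  {l | (∃ i j : ℕ, 0 < i ∧ i < n ∧ j ≤ n ∧
          l = bip (hook (n - i) j) (hook (n - j + 1) (i - 1))) ∨
       (∃ j : ℕ, j < 2 * n ∧ l = bip (hook (2 * n - j) j) 0) ∨
       (∃ i : ℕ, 0 < i ∧ i ≤ 2 * n ∧ l = bip 0 (hook (2 * n - i + 1) (i - 1)))}

/-- The bipartitions of `2n-2` labelling the `B₂`-series unipotent characters in the
principal `Φ_{2n}`-block: `2^i 1^{j-i-1} . (n-i-1)(n-j)` for `0 ≤ i < j ≤ n`. -/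
def LB2 (n : ℕ) : Set Bipartition :=
  {l | ∃ i j : ℕ, i < j ∧ j ≤ n ∧
        l = bip (Multiset.replicate i 2 + Multiset.replicate (j - i - 1) 1)
                {n - i - 1, n - j}}

/-- The bipartitions of `2n-6` labelling the `B₆`-series unipotent characters in the
principal `Φ_{2n}`-block: `(n-i-2)(n-j-1) . 2^{i-1} 1^{j-i-1}` for `0 < i < j < n`. -/
def LB6 (n : ℕ) : Set Bipartition :=
  {l | ∃ i j : ℕ, 0 < i ∧ i < j ∧ j < n ∧
        l = bip {n - i - 2, n - j - 1}
                (Multiset.replicate (i - 1) 2 + Multiset.replicate (j - i - 1) 1)}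

end

/-!
The addable and removable boxes of `2^{n-1}.∅` for the charge `(-2, n+1)` are: in the first
component the addable boxes of contents `-n-1` and `0` and the removable box of content `1-n`,
and in the second component the addable box of content `n+1`. Modulo `2n` the removable box
shares its residue only with the addable box of content `n+1`, which follows it in the `i`-word,
so the word `−+` cancels; every other `i`-word consists of `+` only. For `n ≤ 1` the
bipartition is empty and there is nothing removable at all.
-/

@[simp] lemma Bipartition.partsOf_zero (l : Bipartition) : l.partsOf 0 = l.1 := rfl

@[simp] lemma Bipartition.partsOf_one (l : Bipartition) : l.partsOf 1 = l.2 := rfl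

@[simp] lemma chargeOf_zero (σ : ℤ × ℤ) : chargeOf σ 0 = σ.1 := rfl

@[simp] lemma chargeOf_one (σ : ℤ × ℤ) : chargeOf σ 1 = σ.2 := rfl

section IWord

variable {l : Bipartition} {σ : ℤ × ℤ} {d : ℕ} {i : ZMod d}

lemma pairwise_boxLT_of_content_lt {L : List Box} (h : (L.map (content σ)).Pairwise (· < ·)) :
    L.Pairwise (BoxLT σ) :=
  (List.pairwise_map.mp h).imp Or.inl

lemma isIWord_filter {L : List Box} (hL : L.Pairwise (BoxLT σ))
    (hmem : ∀ b, b ∈ L ↔ Addable l b ∨ Removable l b) :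
    IsIWord l σ d i (L.filter fun b => (content σ b : ZMod d) = i) :=
  ⟨hL.filter _, fun b => by simp [List.mem_filter, hmem]⟩

lemma annihilatedE_of_forall_addable {L : List Box} (hL : IsIWord l σ d i L)
    (h : ∀ b ∈ L, Addable l b) : AnnihilatedE l σ d i := by
  have hsigns : L.map (signOf l) = List.replicate L.length true :=
    List.eq_replicate_iff.mpr ⟨List.length_map _, fun s hs => by
      obtain ⟨b, hb, rfl⟩ := List.mem_map.mp hs
      simp [signOf, h b hb]⟩
  exact ⟨L, hL, L.length, hsigns ▸ .refl⟩

lemma annihilatedE_of_removable_addable {bR bA : Box} (hL : IsIWord l σ d i [bR, bA])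
    (hR : Removable l bR) (hA : Addable l bA) : AnnihilatedE l σ d i := by
  have hR' : ¬ Addable l bR := fun h => by have := h.1; have := hR.1; omega
  refine ⟨[bR, bA], hL, 0, .single ⟨[], [], ?_, rfl⟩⟩
  simp [signOf, hR', hA]

end IWord

lemma parts_ofMul_replicate (r a k : ℕ) :
    (NPartition.ofMul (Multiset.replicate r a)).parts k = if k < r then a else 0 := by
  have hs : (Multiset.replicate r a).sort (· ≤ ·) = List.replicate r a :=
    List.eq_replicate_iff.mpr ⟨by simp, fun b hb => Multiset.eq_of_mem_replicate
      ((Multiset.mem_sort _).mp hb)⟩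
  show ((Multiset.replicate r a).sort (· ≤ ·)).reverse.getD k 0 = _
  rw [hs, List.reverse_replicate]
  split_ifs with h
  · rw [List.getD_eq_getElem _ _ (by simpa using h), List.getElem_replicate]
  · rw [List.getD_eq_default _ _ (by simpa using h)]

lemma parts_ofMul_zero (k : ℕ) : (NPartition.ofMul 0).parts k = 0 :=
  parts_ofMul_replicate 0 0 k

lemma addable_zero_zero_one (a : Multiset ℕ) : Addable (bip a 0) (0, 0, 1) :=
  ⟨parts_ofMul_zero 0, Or.inl rfl⟩

lemma not_removable_bip_zero_zero (b : Box) : ¬ Removable (bip 0 0) b := by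
  obtain ⟨x, y, j⟩ := b
  fin_cases j <;> simp [Removable, bip, parts_ofMul_zero]

lemma addable_bip_zero_zero_iff {b : Box} :
    Addable (bip 0 0) b ↔ b = (0, 0, 0) ∨ b = (0, 0, 1) := by
  obtain ⟨x, y, j⟩ := b
  fin_cases j <;> simp [Addable, bip, parts_ofMul_zero] <;> omega

theorem annihilatedE_bip_zero_zero (σ : ℤ × ℤ) (d : ℕ) (i : ZMod d) :
    AnnihilatedE (bip 0 0) σ d i := by
  let L : List Box := if σ.2 ≤ σ.1 then [(0, 0, 1), (0, 0, 0)] else [(0, 0, 0), (0, 0, 1)]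
  have hL : L.Pairwise (BoxLT σ) := by
    unfold L; split_ifs <;> simp [BoxLT, content] <;> omega
  have hmem : ∀ b, b ∈ L ↔ Addable (bip 0 0) b ∨ Removable (bip 0 0) b := by
    intro b
    simp only [not_removable_bip_zero_zero, or_false, addable_bip_zero_zero_iff, L]
    split_ifs <;> simp [or_comm]
  refine annihilatedE_of_forall_addable (isIWord_filter (i := i) hL hmem) fun b hb => ?_
  exact ((hmem b).mp (List.mem_of_mem_filter hb)).resolve_right (not_removable_bip_zero_zero b)

lemma intCast_ne_intCast_of_sub_lt {c : ℕ} {a b : ℤ} (hpos : 0 < b - a) (hlt : b - a < c) :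
    (a : ZMod c) ≠ b := by
  rw [Ne, ZMod.intCast_eq_intCast_iff_dvd_sub]
  exact fun h => (Int.le_of_dvd hpos h).not_gt hlt

section TwoColumns

variable {r : ℕ} {b : Box}

lemma addable_or_removable_replicate_two_iff (hr : r ≠ 0) :
    Addable (bip (Multiset.replicate r 2) 0) b ∨ Removable (bip (Multiset.replicate r 2) 0) b ↔
      b ∈ [(r, 0, 0), (r - 1, 1, 0), (0, 2, 0), (0, 0, 1)] := by
  obtain ⟨x, y, j⟩ := b
  fin_cases j <;>
    simp [Addable, Removable, bip, parts_ofMul_replicate, parts_ofMul_zero] <;>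
    grind

lemma removable_replicate_two_iff (hr : r ≠ 0) :
    Removable (bip (Multiset.replicate r 2) 0) b ↔ b = (r - 1, 1, 0) := by
  obtain ⟨x, y, j⟩ := b
  fin_cases j <;>
    simp [Removable, bip, parts_ofMul_replicate, parts_ofMul_zero]
  grind

end TwoColumns

lemma isIWord_replicate_two {n : ℕ} (hn : 2 ≤ n) (i : ZMod (2 * n)) :
    IsIWord (bip (Multiset.replicate (n - 1) 2) 0) (-2, (n : ℤ) + 1) (2 * n) i
      ([(n - 1, 0, 0), (n - 1 - 1, 1, 0), (0, 2, 0), (0, 0, 1)].filter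
        fun b => (content (-2, (n : ℤ) + 1) b : ZMod (2 * n)) = i) := by
  refine isIWord_filter (pairwise_boxLT_of_content_lt ?_) fun b =>
    (addable_or_removable_replicate_two_iff (by omega)).symm
  simp only [List.map_cons, List.map_nil, content, chargeOf_zero, chargeOf_one,
    List.pairwise_cons, List.mem_cons, List.not_mem_nil, or_false, forall_eq_or_imp, forall_eq,
    List.Pairwise.nil, IsEmpty.forall_iff, implies_true, and_true]
  push_cast
  omega

theorem annihilatedE_replicate_two {n : ℕ} (hn : 2 ≤ n) (i : ZMod (2 * n)) :
    AnnihilatedE (bip (Multiset.replicate (n - 1) 2) 0) (-2, (n : ℤ) + 1) (2 * n) i := by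
  have hW := isIWord_replicate_two hn i
  set σ : ℤ × ℤ := (-2, (n : ℤ) + 1)
  have hr : n - 1 ≠ 0 := by omega
  have hcast : ∀ a b : ℤ, ((2 * n : ℕ) : ℤ) ∣ b - a → (a : ZMod (2 * n)) = b :=
    fun a b => (ZMod.intCast_eq_intCast_iff_dvd_sub a b _).mpr
  have hBottom : (content σ (n - 1, 0, 0) : ZMod (2 * n)) = ((n - 1 : ℤ) : ZMod (2 * n)) :=
    hcast _ _ ⟨1, by simp only [content, chargeOf_zero, σ]; push_cast; omega⟩
  have hCorner : (content σ (n - 1 - 1, 1, 0) : ZMod (2 * n)) = ((n + 1 : ℤ) : ZMod (2 * n)) :=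
    hcast _ _ ⟨1, by simp only [content, chargeOf_zero, σ]; push_cast; omega⟩
  have hTop : (content σ (0, 2, 0) : ZMod (2 * n)) = ((0 : ℤ) : ZMod (2 * n)) :=
    hcast _ _ ⟨0, by simp [content, σ]⟩
  have hSecond : (content σ (0, 0, 1) : ZMod (2 * n)) = ((n + 1 : ℤ) : ZMod (2 * n)) :=
    hcast _ _ ⟨0, by simp [content, σ]⟩
  have hBottom_ne : ((n - 1 : ℤ) : ZMod (2 * n)) ≠ ((n + 1 : ℤ) : ZMod (2 * n)) :=
    intCast_ne_intCast_of_sub_lt (by omega) (by push_cast; omega)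
  have hTop_ne : ((0 : ℤ) : ZMod (2 * n)) ≠ ((n + 1 : ℤ) : ZMod (2 * n)) :=
    intCast_ne_intCast_of_sub_lt (by omega) (by push_cast; omega)
  by_cases hi : i = ((n + 1 : ℤ) : ZMod (2 * n))
  · subst hi
    simp only [List.filter_cons, hBottom, hCorner, hTop, hSecond, hBottom_ne, hTop_ne,
      decide_true, decide_false, List.filter_nil, Bool.false_eq_true, if_true, if_false] at hW
    exact annihilatedE_of_removable_addable hW ((removable_replicate_two_iff hr).mpr rfl)
      (addable_zero_zero_one _)
  · refine annihilatedE_of_forall_addable hW fun b hb => ?_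
    obtain ⟨hbL, hbi⟩ := List.mem_filter.mp hb
    refine ((addable_or_removable_replicate_two_iff hr).mpr hbL).resolve_right fun hbR => hi ?_
    rw [removable_replicate_two_iff hr] at hbR
    subst hbR
    simpa [hCorner, eq_comm] using hbi

theorem decomposition_numbers_stmt10_general (n : ℕ) (i : ZMod (2 * n)) :
    AnnihilatedE (bip (Multiset.replicate (n - 1) 2) 0) (-2, (n : ℤ) + 1) (2 * n) i := by
  rcases Nat.lt_or_ge n 2 with hn | hn
  · rw [show n - 1 = 0 by omega, Multiset.replicate_zero]
    exact annihilatedE_bip_zero_zero _ _ i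
  · exact annihilatedE_replicate_two hn i

/-- With `d = 2n` and charge `s₁ = (-2, n+1)`, every Kashiwara
operator `ẽ_i` annihilates the bipartition `2^{n-1}.∅`. -/
theorem decomposition_numbers_stmt10 (n : ℕ) (hn : 1 ≤ n) (i : ZMod (2 * n)) :
    AnnihilatedE (bip (Multiset.replicate (n - 1) 2) 0) (-2, (n : ℤ) + 1) (2 * n) i :=
  decomposition_numbers_stmt10_general n i
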